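/- arXiv:2605.30890 — 2 statements merged into one kernel-verified Lean document; each statement's English description precedes it below -/
import Mathlib

section
/- Let Ã, B, L be as in the model and set M₀ = L(I-Ã)⁻¹B and Â = à + BL. Then λ_max(M₀) < 1 if and only if λ_max(Â) < 1. -/
/-!
For `A ≥ 0` with `ρ(A) < 1` the inverse `E = (1 - A)⁻¹ = ∑ Aᵏ` is nonnegative, and a nonnegative
matrix has spectral radius `< 1` exactly when it maps some positive vector `x` strictly below `x`
(Collatz–Wielandt). Such vectors transfer between `A + BL` and `EBL` through the regular
splitting `1 - (A + BL) = (1 - A) - BL`, and between `EBL` and `LEB = L (EBL) L⁻¹` by rescaling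
with the diagonal `L`.
-/

open Matrix

/-- Spectral radius of a real square matrix: the supremum of the absolute values
of its complex eigenvalues. -/
noncomputable def specRad {n : ℕ} (M : Matrix (Fin n) (Fin n) ℝ) : ℝ :=
  sSup {r : ℝ | ∃ μ : ℂ, μ ∈ spectrum ℂ (M.map (algebraMap ℝ ℂ)) ∧ r = ‖μ‖}

/-- Irreducibility of a nonnegative matrix: every entry communicates with
every other through some power. -/
def MatIrred {n : ℕ} (A : Matrix (Fin n) (Fin n) ℝ) : Prop :=
  ∀ i j, ∃ k : ℕ, 0 < k ∧ 0 < (A ^ k) i j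

open Filter Topology
open scoped ENNReal

theorem summable_norm_pow_of_spectralRadius_lt_one {A : Type*} [NormedRing A]
    [NormedAlgebra ℂ A] [CompleteSpace A] {a : A} (ha : spectralRadius ℂ a < 1) :
    Summable (fun k : ℕ => ‖a ^ k‖) := by
  obtain ⟨r, hρr, hr1⟩ := ENNReal.lt_iff_exists_nnreal_btwn.mp ha
  refine .of_norm_bounded_eventually_nat
    (summable_geometric_of_lt_one r.coe_nonneg (by exact_mod_cast hr1)) ?_
  filter_upwards [(spectrum.pow_norm_pow_one_div_tendsto_nhds_spectralRadius a).eventually_lt_const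
    hρr, eventually_ne_atTop 0] with k hk hk0
  rw [← ENNReal.ofReal_coe_nnreal, ENNReal.ofReal_lt_ofReal_iff_of_nonneg (by positivity)] at hk
  rw [norm_norm, ← Real.rpow_inv_natCast_pow (norm_nonneg (a ^ k)) hk0, ← one_div]
  exact pow_le_pow_left₀ (by positivity) hk.le k

theorem eventually_nhdsGT_zero_forall_mul_lt {ι : Type*} [Finite ι] (f : ι → ℝ) {g : ι → ℝ}
    (hg : ∀ i, 0 < g i) : ∀ᶠ ε in 𝓝[>] (0 : ℝ), ∀ i, ε * f i < g i :=
  eventually_all.2 fun i => nhdsWithin_le_nhds <|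
    ((continuous_mul_const (f i)).tendsto' 0 0 (zero_mul _)).eventually (gt_mem_nhds (hg i))

namespace Matrix

variable {ι : Type*} [Fintype ι]

theorem mul_apply_nonneg {P Q : Matrix ι ι ℝ} (hP : ∀ i j, 0 ≤ P i j) (hQ : ∀ i j, 0 ≤ Q i j)
    (i j : ι) : 0 ≤ (P * Q) i j :=
  Finset.sum_nonneg fun k _ => mul_nonneg (hP i k) (hQ k j)

theorem mulVec_mono_of_nonneg {M : Matrix ι ι ℝ} (hM : ∀ i j, 0 ≤ M i j) {u v : ι → ℝ}
    (huv : u ≤ v) : M *ᵥ u ≤ M *ᵥ v :=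
  fun i => Finset.sum_le_sum fun j _ => mul_le_mul_of_nonneg_left (huv j) (hM i j)

theorem mulVec_nonneg_of_nonneg {M : Matrix ι ι ℝ} (hM : ∀ i j, 0 ≤ M i j) {v : ι → ℝ}
    (hv : 0 ≤ v) : 0 ≤ M *ᵥ v := by
  simpa using mulVec_mono_of_nonneg hM hv

theorem le_of_smul_le_mulVec_of_mulVec_le_smul {M : Matrix ι ι ℝ} (hM : ∀ i j, 0 ≤ M i j)
    {s x : ι → ℝ} {r c : ℝ} (hs0 : 0 ≤ s) (hs : s ≠ 0) (hx : ∀ i, 0 < x i)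
    (hMs : r • s ≤ M *ᵥ s) (hMx : M *ᵥ x ≤ c • x) : r ≤ c := by
  obtain ⟨j, hj⟩ := Function.ne_iff.mp hs
  have : Nonempty ι := ⟨j⟩
  -- scale `x` so that `t • x` lies above `s` and touches it at the index `i`
  obtain ⟨i, hi⟩ := Finite.exists_max fun j => s j / x j
  set t := s i / x i
  have hst : s ≤ t • x := fun j => (div_le_iff₀ (hx j)).1 (hi j)
  have hsi : s i = t * x i := (div_mul_cancel₀ _ (hx i).ne').symm
  have ht : 0 < t := (div_pos ((hs0 j).lt_of_ne' hj) (hx j)).trans_le (hi j)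
  have key : r * s i ≤ c * s i := calc
    r * s i ≤ (M *ᵥ s) i := hMs i
    _ ≤ (M *ᵥ (t • x)) i := mulVec_mono_of_nonneg hM hst i
    _ = t * (M *ᵥ x) i := by rw [mulVec_smul]; rfl
    _ ≤ t * (c * x i) := mul_le_mul_of_nonneg_left (hMx i) ht.le
    _ = c * s i := by rw [hsi]; ring
  exact le_of_mul_le_mul_right key (hsi ▸ mul_pos ht (hx i))

theorem norm_le_of_mem_spectrum_map [DecidableEq ι] {M : Matrix ι ι ℝ} (hM : ∀ i j, 0 ≤ M i j)
    {x : ι → ℝ} {c : ℝ} (hx : ∀ i, 0 < x i) (hMx : M *ᵥ x ≤ c • x) {μ : ℂ}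
    (hμ : μ ∈ spectrum ℂ (M.map (algebraMap ℝ ℂ))) : ‖μ‖ ≤ c := by
  rw [← spectrum_toLin', ← Module.End.hasEigenvalue_iff_mem_spectrum] at hμ
  obtain ⟨v, hv⟩ := hμ.exists_hasEigenvector
  have hMv : M.map (algebraMap ℝ ℂ) *ᵥ v = μ • v := by simpa using hv.apply_eq_smul
  refine le_of_smul_le_mulVec_of_mulVec_le_smul hM (s := fun j => ‖v j‖)
    (fun j => norm_nonneg _) (fun h => hv.2 ?_) hx (fun i => ?_) hMx
  · ext j
    simpa using congrFun h j
  calc ‖μ‖ * ‖v i‖ = ‖(M.map (algebraMap ℝ ℂ) *ᵥ v) i‖ := by rw [hMv]; simp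
    _ ≤ ∑ j, ‖M.map (algebraMap ℝ ℂ) i j * v j‖ := norm_sum_le _ _
    _ = (M *ᵥ fun j => ‖v j‖) i := by
      simp [mulVec, dotProduct, abs_of_nonneg (hM _ _)]

def HasPosSubinvariantVec (M : Matrix ι ι ℝ) : Prop :=
  ∃ x : ι → ℝ, (∀ i, 0 < x i) ∧ ∀ i, (M *ᵥ x) i < x i

theorem hasPosSubinvariantVec_mul_diagonal_iff [DecidableEq ι] {P : Matrix ι ι ℝ} {l : ι → ℝ}
    (hl : ∀ i, 0 < l i) :
    HasPosSubinvariantVec (P * diagonal l) ↔ HasPosSubinvariantVec (diagonal l * P) := by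
  have hdiag (v : ι → ℝ) : diagonal l *ᵥ v = l * v := funext (mulVec_diagonal l v)
  have hright (v : ι → ℝ) : (P * diagonal l) *ᵥ v = P *ᵥ (l * v) := by
    rw [← mulVec_mulVec, hdiag]
  have hleft (v : ι → ℝ) : (diagonal l * P) *ᵥ v = l * (P *ᵥ v) := by
    rw [← mulVec_mulVec, hdiag]
  constructor
  · rintro ⟨x, hx, hPx⟩
    refine ⟨l * x, fun i => mul_pos (hl i) (hx i), fun i => ?_⟩
    rw [hleft, Pi.mul_apply, Pi.mul_apply, ← hright]
    exact mul_lt_mul_of_pos_left (hPx i) (hl i)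
  · rintro ⟨y, hy, hPy⟩
    refine ⟨y / l, fun i => div_pos (hy i) (hl i), fun i => ?_⟩
    have hly : l * (y / l) = y := funext fun i => mul_div_cancel₀ _ (hl i).ne'
    rw [hright, hly, Pi.div_apply, lt_div_iff₀' (hl i)]
    simpa [hleft] using hPy i

section RegularSplitting

variable [DecidableEq ι] {A : Matrix ι ι ℝ}

theorem mulVec_inv_one_sub_mulVec (hdet : IsUnit (1 - A).det) (w : ι → ℝ) :
    A *ᵥ ((1 - A)⁻¹ *ᵥ w) = (1 - A)⁻¹ *ᵥ w - w := by
  have hAE : A * (1 - A)⁻¹ = (1 - A)⁻¹ - 1 := calc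
    A * (1 - A)⁻¹ = (1 - A)⁻¹ - (1 - A) * (1 - A)⁻¹ := by rw [sub_mul, one_mul, sub_sub_cancel]
    _ = (1 - A)⁻¹ - 1 := by rw [mul_nonsing_inv _ hdet]
  rw [mulVec_mulVec, hAE, sub_mulVec, one_mulVec]

theorem le_inv_one_sub_mulVec (hA : ∀ i j, 0 ≤ A i j) (hdet : IsUnit (1 - A).det)
    (hE : ∀ i j, 0 ≤ (1 - A)⁻¹ i j) {w : ι → ℝ} (hw : 0 ≤ w) : w ≤ (1 - A)⁻¹ *ᵥ w := by
  have := mulVec_nonneg_of_nonneg hA (mulVec_nonneg_of_nonneg hE hw)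
  rwa [mulVec_inv_one_sub_mulVec hdet, sub_nonneg] at this

theorem hasPosSubinvariantVec_add_iff {C : Matrix ι ι ℝ} (hA : ∀ i j, 0 ≤ A i j)
    (hC : ∀ i j, 0 ≤ C i j) (hdet : IsUnit (1 - A).det) (hE : ∀ i j, 0 ≤ (1 - A)⁻¹ i j) :
    HasPosSubinvariantVec (A + C) ↔ HasPosSubinvariantVec ((1 - A)⁻¹ * C) := by
  set E := (1 - A)⁻¹
  constructor
  · rintro ⟨x, hx, hACx⟩
    set w := x - A *ᵥ x - C *ᵥ x
    have hw : ∀ i, 0 < w i := fun i => by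
      have := hACx i
      simp only [add_mulVec, Pi.add_apply] at this
      simp only [w, Pi.sub_apply]
      linarith
    have hECx : (E * C) *ᵥ x = x - E *ᵥ w := by
      have hCx : C *ᵥ x = (1 - A) *ᵥ x - w := by
        simp only [w, sub_mulVec, one_mulVec]
        abel
      rw [← mulVec_mulVec, hCx, mulVec_sub, mulVec_mulVec, nonsing_inv_mul _ hdet, one_mulVec]
    refine ⟨x, hx, fun i => ?_⟩
    rw [hECx]
    exact sub_lt_self _ ((hw i).trans_le (le_inv_one_sub_mulVec hA hdet hE (fun j => (hw j).le) i))
  · rintro ⟨y, hy, hECy⟩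
    -- perturb `C y` by `ε • 1` to make it positive, `ε` small enough to keep `E (C y + ε • 1) < y`
    obtain ⟨ε, hε, hε0⟩ := ((eventually_nhdsGT_zero_forall_mul_lt (E *ᵥ 1)
      (g := y - (E * C) *ᵥ y) fun i => sub_pos.2 (hECy i)).and self_mem_nhdsWithin).exists
    set w := C *ᵥ y + ε • 1
    have hw : ∀ i, 0 < w i := fun i => by
      have := mulVec_nonneg_of_nonneg hC (fun j => (hy j).le) i
      simp only [w, Pi.add_apply, Pi.smul_apply, Pi.one_apply, smul_eq_mul, mul_one]
      exact add_pos_of_nonneg_of_pos this hε0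
    have hCEw : C *ᵥ (E *ᵥ w) ≤ C *ᵥ y := by
      refine mulVec_mono_of_nonneg hC fun j => ?_
      have := hε j
      simp only [w, mulVec_add, mulVec_smul, mulVec_mulVec, Pi.add_apply, Pi.smul_apply,
        Pi.sub_apply, smul_eq_mul] at this ⊢
      linarith
    have hEw := le_inv_one_sub_mulVec hA hdet hE fun j => (hw j).le
    refine ⟨E *ᵥ w, fun i => (hw i).trans_le (hEw i), fun i => ?_⟩
    have := hCEw i
    rw [add_mulVec, Pi.add_apply, mulVec_inv_one_sub_mulVec hdet]
    simp only [w, Pi.sub_apply, Pi.add_apply, Pi.smul_apply, Pi.one_apply, smul_eq_mul] at this ⊢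
    linarith

end RegularSplitting

end Matrix

section SpecRad

variable {n : ℕ}

theorem specRad_le_of_mulVec_le_smul {M : Matrix (Fin n) (Fin n) ℝ} (hM : ∀ i j, 0 ≤ M i j)
    {x : Fin n → ℝ} {c : ℝ} (hx : ∀ i, 0 < x i) (hc : 0 ≤ c) (hMx : M *ᵥ x ≤ c • x) :
    specRad M ≤ c :=
  Real.sSup_le (by rintro r ⟨μ, hμ, rfl⟩; exact norm_le_of_mem_spectrum_map hM hx hMx hμ) hc

theorem specRad_lt_one_of_mulVec_lt {M : Matrix (Fin n) (Fin n) ℝ} (hM : ∀ i j, 0 ≤ M i j)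
    {x : Fin n → ℝ} (hx : ∀ i, 0 < x i) (hMx : ∀ i, (M *ᵥ x) i < x i) : specRad M < 1 := by
  obtain ⟨ε, hε, hε0, hε1⟩ := ((eventually_nhdsGT_zero_forall_mul_lt x
    (g := x - M *ᵥ x) fun i => sub_pos.2 (hMx i)).and (Ioo_mem_nhdsGT one_pos)).exists
  refine (specRad_le_of_mulVec_le_smul hM hx (sub_nonneg.2 hε1.le) fun i => ?_).trans_lt
    (sub_lt_self 1 hε0)
  have := hε i
  simp only [Pi.sub_apply, Pi.smul_apply, smul_eq_mul] at this ⊢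
  linarith

section LinftyNorm

attribute [local instance] Matrix.linftyOpNormedRing Matrix.linftyOpNormedAlgebra

theorem spectralRadius_map_le_specRad (M : Matrix (Fin n) (Fin n) ℝ) :
    spectralRadius ℂ (M.map (algebraMap ℝ ℂ)) ≤ ENNReal.ofReal (specRad M) := by
  have hbdd := ((spectrum.isCompact (M.map (algebraMap ℝ ℂ))).image
    (f := fun μ : ℂ => ‖μ‖) continuous_norm).bddAbove
  refine iSup₂_le fun μ hμ => ?_
  rw [← enorm_eq_nnnorm, ← ofReal_norm]
  exact ENNReal.ofReal_le_ofReal (le_csSup (by simpa [Set.image, eq_comm] using hbdd) ⟨μ, hμ, rfl⟩)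

theorem summable_pow_of_specRad_lt_one {M : Matrix (Fin n) (Fin n) ℝ} (hM : specRad M < 1) :
    Summable (M ^ ·) := by
  have hρ : spectralRadius ℂ (M.map (algebraMap ℝ ℂ)) < 1 :=
    (spectralRadius_map_le_specRad M).trans_lt (ENNReal.ofReal_lt_one.mpr hM)
  have hC : Summable (M.map (algebraMap ℝ ℂ) ^ ·) :=
    .of_norm (summable_norm_pow_of_spectralRadius_lt_one hρ)
  refine Pi.summable.2 fun i => Pi.summable.2 fun j => ?_
  have := Pi.summable.1 (Pi.summable.1 hC i) j
  simp only [← Matrix.map_pow] at this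
  exact Complex.summable_ofReal.1 this

end LinftyNorm

theorem isUnit_det_one_sub_of_specRad_lt_one {M : Matrix (Fin n) (Fin n) ℝ}
    (hM : specRad M < 1) : IsUnit (1 - M).det :=
  isUnit_det_of_right_inverse (summable_pow_of_specRad_lt_one hM).one_sub_mul_tsum_pow

theorem inv_one_sub_apply_nonneg {M : Matrix (Fin n) (Fin n) ℝ} (hM0 : ∀ i j, 0 ≤ M i j)
    (hM : specRad M < 1) (i j : Fin n) : 0 ≤ (1 - M)⁻¹ i j := by
  have hsum := summable_pow_of_specRad_lt_one hM
  rw [inv_eq_right_inv hsum.one_sub_mul_tsum_pow]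
  exact (hsum.hasSum.map (entryAddMonoidHom ℝ i j) (continuous_apply_apply i j)).nonneg
    fun k => pow_apply_nonneg hM0 k i j

theorem specRad_lt_one_iff_hasPosSubinvariantVec {M : Matrix (Fin n) (Fin n) ℝ}
    (hM : ∀ i j, 0 ≤ M i j) : specRad M < 1 ↔ HasPosSubinvariantVec M := by
  refine ⟨fun h => ?_, fun ⟨x, hx, hMx⟩ => specRad_lt_one_of_mulVec_lt hM hx hMx⟩
  have hdet := isUnit_det_one_sub_of_specRad_lt_one h
  have hx := le_inv_one_sub_mulVec hM hdet (inv_one_sub_apply_nonneg hM h) zero_le_one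
  refine ⟨(1 - M)⁻¹ *ᵥ 1, fun i => one_pos.trans_le (hx i), fun i => ?_⟩
  rw [mulVec_inv_one_sub_mulVec hdet, Pi.sub_apply, Pi.one_apply]
  exact sub_one_lt _

end SpecRad

theorem specRad_M0_iff_specRad_Ahat_general {n : ℕ}
    (A B : Matrix (Fin n) (Fin n) ℝ) (l : Fin n → ℝ)
    (hA0 : ∀ i j, 0 ≤ A i j) (hAspec : specRad A < 1)
    (hl : ∀ j, 0 < l j)
    (hB0 : ∀ i j, 0 ≤ B i j) :
    specRad (Matrix.diagonal l * (1 - A)⁻¹ * B) < 1 ↔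
      specRad (A + B * Matrix.diagonal l) < 1 := by
  have hE := inv_one_sub_apply_nonneg hA0 hAspec
  have hL : ∀ i j, 0 ≤ diagonal l i j := fun i j => by
    rw [diagonal_apply]
    split_ifs
    exacts [(hl i).le, le_rfl]
  have hBL := mul_apply_nonneg hB0 hL
  have hAhat : ∀ i j, 0 ≤ (A + B * diagonal l) i j := fun i j => add_nonneg (hA0 i j) (hBL i j)
  rw [specRad_lt_one_iff_hasPosSubinvariantVec (mul_apply_nonneg (mul_apply_nonneg hL hE) hB0),
    specRad_lt_one_iff_hasPosSubinvariantVec hAhat,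
    Matrix.mul_assoc, ← hasPosSubinvariantVec_mul_diagonal_iff hl,
    hasPosSubinvariantVec_add_iff hA0 hBL (isUnit_det_one_sub_of_specRad_lt_one hAspec) hE,
    Matrix.mul_assoc]

theorem specRad_M0_iff_specRad_Ahat {n : ℕ}
    (A B : Matrix (Fin n) (Fin n) ℝ) (l : Fin n → ℝ)
    (hA0 : ∀ i j, 0 ≤ A i j) (hAirr : MatIrred A) (hAspec : specRad A < 1)
    (hl : ∀ j, 0 < l j)
    (hB0 : ∀ i j, 0 ≤ B i j) (hBcol : ∀ j, ∃ i, 0 < B i j) :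
    specRad (Matrix.diagonal l * (1 - A)⁻¹ * B) < 1 ↔
      specRad (A + B * Matrix.diagonal l) < 1 :=
  specRad_M0_iff_specRad_Ahat_general A B l hA0 hAspec hl hB0
end

section
/- Let M be a strictly positive n×n matrix with λ_max(M) = 1. Then the set {w ∈ ℝⁿ₊ : w₁ = 1, wᵀ(I - M) ≥ 0ᵀ} consists of exactly one point, namely the left Perron eigenvector of M normalized by its first coordinate. -/
/-!
For a positive matrix `A`, the largest `t` such that `t • x ≤ A *ᵥ x` for some `x` in the
standard simplex is attained (the Collatz–Wielandt set is compact) at an eigenpair, since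
otherwise one more application of `A` makes all inequalities strict. The triangle inequality
shows that an eigenpair `(μ, v)` of the complexification yields the feasible pair `(‖μ‖, |v|)`,
so this maximum is the spectral radius and has a positive eigenvector. Applied to `M` and `Mᵀ`
this gives positive right and left eigenvectors `x`, `y` for the eigenvalue `1`.

If `w ᵥ* (1 - M) ≥ 0`, pairing with `x` shows that this slack vanishes, so `w` is a left
eigenvector. Then `w - t • y`, for the largest `t` keeping it nonnegative, is a nonnegative left
eigenvector with a zero entry, hence zero by positivity of `M`.
-/

open Matrix

section PerronFrobenius

variable {ι : Type*} [Fintype ι]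

theorem mem_spectrum_iff_exists_mulVec_eq_smul {K : Type*} [Field K] [DecidableEq ι]
    {B : Matrix ι ι K} {μ : K} : μ ∈ spectrum K B ↔ ∃ v ≠ 0, B *ᵥ v = μ • v := by
  rw [← spectrum_toLin', ← Module.End.hasEigenvalue_iff_mem_spectrum,
    Module.End.hasEigenvalue_iff, Submodule.ne_bot_iff]
  simp only [Module.End.mem_eigenspace_iff, toLin'_apply]
  tauto

theorem ofReal_mem_spectrum_map_of_mulVec_eq_smul [DecidableEq ι] {A : Matrix ι ι ℝ}
    {x : ι → ℝ} {ρ : ℝ} (hx : x ≠ 0) (hAx : A *ᵥ x = ρ • x) :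
    (ρ : ℂ) ∈ spectrum ℂ (A.map (algebraMap ℝ ℂ)) := by
  refine mem_spectrum_iff_exists_mulVec_eq_smul.2 ⟨algebraMap ℝ ℂ ∘ x, ?_, funext fun i => ?_⟩
  · exact fun h => hx (funext fun i => (algebraMap ℝ ℂ).injective (congrFun h i))
  · rw [← RingHom.map_mulVec, hAx]
    simp

theorem norm_smul_le_mulVec_norm {A : Matrix ι ι ℝ} (hA : ∀ i j, 0 ≤ A i j) {v : ι → ℂ}
    {μ : ℂ} (hv : A.map (algebraMap ℝ ℂ) *ᵥ v = μ • v) :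
    ‖μ‖ • (fun i => ‖v i‖) ≤ A *ᵥ fun i => ‖v i‖ := fun i =>
  calc ‖μ‖ * ‖v i‖ = ‖∑ j, (A i j : ℂ) * v j‖ := by
        rw [← norm_mul, ← smul_eq_mul, ← Pi.smul_apply, ← hv]; rfl
    _ ≤ ∑ j, A i j * ‖v j‖ := by
        refine (norm_sum_le _ _).trans_eq (Finset.sum_congr rfl fun j _ => ?_)
        rw [norm_mul, Complex.norm_real, Real.norm_of_nonneg (hA i j)]

theorem mulVec_apply_pos {A : Matrix ι ι ℝ} (hA : ∀ i j, 0 < A i j) {u : ι → ℝ} (hu : 0 ≤ u)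
    (hu0 : u ≠ 0) (i : ι) : 0 < (A *ᵥ u) i := by
  obtain ⟨k, hk⟩ := Function.ne_iff.1 hu0
  exact Finset.sum_pos' (fun j _ => mul_nonneg (hA i j).le (hu j))
    ⟨k, Finset.mem_univ k, mul_pos (hA i k) ((hu k).lt_of_ne' hk)⟩

theorem vecMul_apply_pos {A : Matrix ι ι ℝ} (hA : ∀ i j, 0 < A i j) {u : ι → ℝ} (hu : 0 ≤ u)
    (hu0 : u ≠ 0) (j : ι) : 0 < (u ᵥ* A) j := by
  rw [← mulVec_transpose]
  exact mulVec_apply_pos (fun i j => hA j i) hu hu0 j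

theorem dotProduct_pos_of_pos [Nonempty ι] {x y : ι → ℝ} (hx : ∀ i, 0 < x i)
    (hy : ∀ i, 0 < y i) : 0 < x ⬝ᵥ y :=
  Finset.sum_pos (fun i _ => mul_pos (hx i) (hy i)) Finset.univ_nonempty

theorem eq_of_vecMul_eq_smul_of_mulVec_eq_smul {A : Matrix ι ι ℝ} {x y : ι → ℝ} {ρ σ : ℝ}
    (hyA : y ᵥ* A = σ • y) (hAx : A *ᵥ x = ρ • x) (hyx : y ⬝ᵥ x ≠ 0) : σ = ρ := by
  refine mul_right_cancel₀ hyx ?_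
  rw [← smul_eq_mul, ← smul_dotProduct, ← hyA, ← dotProduct_mulVec, hAx, dotProduct_smul,
    smul_eq_mul]

/-- The Perron root of `A` is the largest first coordinate of a point of this set. -/
def collatzWielandtSet (A : Matrix ι ι ℝ) : Set (ℝ × (ι → ℝ)) :=
  {p | p.2 ∈ stdSimplex ℝ ι ∧ 0 ≤ p.1 ∧ p.1 • p.2 ≤ A *ᵥ p.2}

theorem le_sum_sum_of_mem_collatzWielandtSet {A : Matrix ι ι ℝ} (hA : ∀ i j, 0 ≤ A i j)
    {p : ℝ × (ι → ℝ)} (hp : p ∈ collatzWielandtSet A) : p.1 ≤ ∑ i, ∑ j, A i j := by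
  obtain ⟨hS, -, hle⟩ := hp
  calc p.1 = ∑ i, p.1 * p.2 i := by rw [← Finset.mul_sum, hS.2, mul_one]
    _ ≤ ∑ i, ∑ j, A i j * p.2 j := Finset.sum_le_sum fun i _ => hle i
    _ ≤ ∑ i, ∑ j, A i j := by
        gcongr with i _ j _
        exact mul_le_of_le_one_right (hA i j) (mem_Icc_of_mem_stdSimplex hS j).2

theorem isCompact_collatzWielandtSet {A : Matrix ι ι ℝ} (hA : ∀ i j, 0 ≤ A i j) :
    IsCompact (collatzWielandtSet A) := by
  have hclosed : IsClosed (collatzWielandtSet A) :=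
    (isClosed_stdSimplex ℝ ι |>.preimage continuous_snd).inter
      ((isClosed_le continuous_const continuous_fst).inter
        (isClosed_le (continuous_fst.smul continuous_snd)
          (continuous_const.matrix_mulVec continuous_snd)))
  refine (isCompact_Icc.prod (isCompact_stdSimplex ℝ ι)).of_isClosed_subset hclosed
    fun p hp => ⟨⟨hp.2.1, le_sum_sum_of_mem_collatzWielandtSet hA hp⟩, hp.1⟩

theorem collatzWielandtSet_nonempty [Nonempty ι] {A : Matrix ι ι ℝ} (hA : ∀ i j, 0 ≤ A i j) :
    (collatzWielandtSet A).Nonempty := by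
  classical
  obtain ⟨i⟩ := ‹Nonempty ι›
  have hS := single_mem_stdSimplex ℝ i
  refine ⟨(0, Pi.single i 1), hS, le_rfl, ?_⟩
  rw [zero_smul]
  exact fun k => Finset.sum_nonneg fun j _ => mul_nonneg (hA k j) (hS.1 j)

theorem mem_collatzWielandtSet_of_smul_le_mulVec {A : Matrix ι ι ℝ} {t : ℝ} {x : ι → ℝ}
    (ht : 0 ≤ t) (hx : 0 ≤ x) (hx0 : x ≠ 0) (hle : t • x ≤ A *ᵥ x) :
    (t, (∑ i, x i)⁻¹ • x) ∈ collatzWielandtSet A := by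
  obtain ⟨k, hk⟩ := Function.ne_iff.1 hx0
  have hs : 0 < ∑ i, x i :=
    Finset.sum_pos' (fun i _ => hx i) ⟨k, Finset.mem_univ k, (hx k).lt_of_ne' hk⟩
  refine ⟨⟨fun i => mul_nonneg (inv_nonneg.2 hs.le) (hx i), ?_⟩, ht, ?_⟩
  · simp only [Pi.smul_apply, smul_eq_mul, ← Finset.mul_sum, inv_mul_cancel₀ hs.ne']
  · rw [smul_comm, mulVec_smul]
    exact smul_le_smul_of_nonneg_left hle (inv_nonneg.2 hs.le)

theorem exists_gt_smul_le_mulVec [Nonempty ι] {A : Matrix ι ι ℝ} {t : ℝ} {z : ι → ℝ}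
    (hz : ∀ i, 0 < z i) (hlt : ∀ i, t * z i < (A *ᵥ z) i) :
    ∃ t' > t, t' • z ≤ A *ᵥ z := by
  obtain ⟨i₀, -, hi₀⟩ :=
    Finset.univ.exists_min_image (fun i => (A *ᵥ z) i / z i) Finset.univ_nonempty
  refine ⟨(A *ᵥ z) i₀ / z i₀, (lt_div_iff₀ (hz i₀)).2 (hlt i₀), fun i => ?_⟩
  exact (le_div_iff₀ (hz i)).1 (hi₀ i (Finset.mem_univ i))

/-- Applying `A` once more to a feasible pair that is not an eigenpair makes every inequality
strict. -/
theorem exists_gt_mem_collatzWielandtSet [Nonempty ι] {A : Matrix ι ι ℝ}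
    (hA : ∀ i j, 0 < A i j) {t : ℝ} {x : ι → ℝ} (ht : 0 ≤ t) (hx : 0 ≤ x) (hx0 : x ≠ 0)
    (hle : t • x ≤ A *ᵥ x) (hne : A *ᵥ x ≠ t • x) :
    ∃ t' > t, ∃ x', (t', x') ∈ collatzWielandtSet A := by
  have hz : ∀ i, 0 < (A *ᵥ x) i := mulVec_apply_pos hA hx hx0
  have hlt : ∀ i, t * (A *ᵥ x) i < (A *ᵥ (A *ᵥ x)) i := fun i => by
    have := mulVec_apply_pos hA (sub_nonneg.2 hle) (sub_ne_zero.2 hne) i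
    rwa [mulVec_sub, mulVec_smul, Pi.sub_apply, sub_pos] at this
  obtain ⟨t', htt', hle'⟩ := exists_gt_smul_le_mulVec hz hlt
  exact ⟨t', htt', _, mem_collatzWielandtSet_of_smul_le_mulVec (ht.trans htt'.le)
    (fun i => (hz i).le) (fun h => (hz (Classical.arbitrary ι)).ne' (congrFun h _)) hle'⟩

theorem exists_perron_eigenvector [DecidableEq ι] [Nonempty ι] {A : Matrix ι ι ℝ}
    (hA : ∀ i j, 0 < A i j) :
    ∃ ρ : ℝ, ∃ x : ι → ℝ, (∀ i, 0 < x i) ∧ A *ᵥ x = ρ • x ∧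
      IsGreatest {r : ℝ | ∃ μ : ℂ, μ ∈ spectrum ℂ (A.map (algebraMap ℝ ℂ)) ∧ r = ‖μ‖} ρ := by
  obtain ⟨⟨ρ, x⟩, ⟨hxS, hρ, hle⟩, hmax⟩ :=
    (isCompact_collatzWielandtSet fun i j => (hA i j).le).exists_isMaxOn
      (collatzWielandtSet_nonempty fun i j => (hA i j).le) continuous_fst.continuousOn
  have hx0 : x ≠ 0 := fun h => by simpa [h] using hxS.2
  have hAx : A *ᵥ x = ρ • x := by
    by_contra hne
    obtain ⟨t', hρt', x', hmem⟩ := exists_gt_mem_collatzWielandtSet hA hρ hxS.1 hx0 hle hne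
    exact (hmax hmem).not_gt hρt'
  refine ⟨ρ, x, fun i => pos_of_mul_pos_right ?_ hρ, hAx,
    ⟨⟨ρ, ofReal_mem_spectrum_map_of_mulVec_eq_smul hx0 hAx, by simp [abs_of_nonneg hρ]⟩, ?_⟩⟩
  · simpa [hAx] using mulVec_apply_pos hA hxS.1 hx0 i
  · rintro _ ⟨μ, hμ, rfl⟩
    obtain ⟨v, hv0, hv⟩ := mem_spectrum_iff_exists_mulVec_eq_smul.1 hμ
    refine hmax (mem_collatzWielandtSet_of_smul_le_mulVec (norm_nonneg μ)
      (fun i => norm_nonneg (v i)) ?_ (norm_smul_le_mulVec_norm (fun i j => (hA i j).le) hv))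
    exact fun h => hv0 (funext fun i => norm_eq_zero.1 (congrFun h i))

theorem specRad_eq_of_isGreatest {n : ℕ} {A : Matrix (Fin n) (Fin n) ℝ} {ρ : ℝ}
    (h : IsGreatest {r : ℝ | ∃ μ : ℂ, μ ∈ spectrum ℂ (A.map (algebraMap ℝ ℂ)) ∧ r = ‖μ‖} ρ) :
    specRad A = ρ :=
  h.csSup_eq

theorem eq_zero_of_nonneg_of_dotProduct_eq_zero {d x : ι → ℝ} (hd : 0 ≤ d)
    (hx : ∀ i, 0 < x i) (h : d ⬝ᵥ x = 0) : d = 0 := funext fun i =>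
  (mul_eq_zero.1 ((Finset.sum_eq_zero_iff_of_nonneg fun j _ => mul_nonneg (hd j) (hx j).le).1
    h i (Finset.mem_univ i))).resolve_right (hx i).ne'

/-- The slack `w ᵥ* (1 - M)` is nonnegative and orthogonal to `x`. -/
theorem vecMul_eq_self_of_nonneg_vecMul_one_sub [DecidableEq ι] {M : Matrix ι ι ℝ}
    {x w : ι → ℝ} (hx : ∀ i, 0 < x i) (hMx : M *ᵥ x = x) (hw : 0 ≤ w ᵥ* (1 - M)) :
    w ᵥ* M = w := by
  have h := eq_zero_of_nonneg_of_dotProduct_eq_zero hw hx (by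
    rw [← dotProduct_mulVec, sub_mulVec, one_mulVec, hMx, sub_self, dotProduct_zero])
  rw [vecMul_sub, vecMul_one, sub_eq_zero] at h
  exact h.symm

/-- Subtracting the largest multiple of `y` that keeps `w - t • y` nonnegative leaves a
nonnegative left eigenvector with a zero entry, which vanishes by positivity of `M`. -/
theorem exists_eq_smul_of_vecMul_eq_smul [Nonempty ι] {M : Matrix ι ι ℝ}
    (hM : ∀ i j, 0 < M i j) {y w : ι → ℝ} {r : ℝ} (hy : ∀ i, 0 < y i) (hyM : y ᵥ* M = r • y)
    (hwM : w ᵥ* M = r • w) : ∃ t : ℝ, w = t • y := by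
  obtain ⟨i₀, -, hi₀⟩ := Finset.univ.exists_min_image (fun i => w i / y i) Finset.univ_nonempty
  set t := w i₀ / y i₀
  have hu : 0 ≤ w - t • y := fun i => by
    simpa [sub_nonneg] using (le_div_iff₀ (hy i)).1 (hi₀ i (Finset.mem_univ i))
  have hu₀ : (w - t • y) i₀ = 0 := by simp [t, div_mul_cancel₀ _ (hy i₀).ne']
  have huM : (w - t • y) ᵥ* M = r • (w - t • y) := by
    rw [sub_vecMul, smul_vecMul, hwM, hyM, smul_sub, smul_comm]
  refine ⟨t, sub_eq_zero.1 (by_contra fun hne => ?_)⟩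
  have := vecMul_apply_pos hM hu hne i₀
  simp [huM, hu₀] at this

end PerronFrobenius

theorem price_region_degenerates_at_rstar {n : ℕ}
    (M : Matrix (Fin (n + 1)) (Fin (n + 1)) ℝ) (hM : ∀ i j, 0 < M i j)
    (hspec : specRad M = 1) :
    ∃ y : Fin (n + 1) → ℝ, (∀ i, 0 < y i) ∧ y 0 = 1 ∧ y ᵥ* M = y ∧
      {w : Fin (n + 1) → ℝ | (∀ i, 0 ≤ w i) ∧ w 0 = 1 ∧
        ∀ j, 0 ≤ (w ᵥ* (1 - M)) j} = {y} := by
  obtain ⟨ρ, x, hx, hMx, hρ⟩ := exists_perron_eigenvector hM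
  rw [specRad_eq_of_isGreatest hρ] at hspec
  subst hspec
  obtain ⟨σ, z, hz, hzM, -⟩ := exists_perron_eigenvector (A := Mᵀ) fun i j => hM j i
  rw [mulVec_transpose] at hzM
  obtain rfl : σ = 1 :=
    eq_of_vecMul_eq_smul_of_mulVec_eq_smul hzM hMx (dotProduct_pos_of_pos hz hx).ne'
  rw [one_smul] at hMx
  set y := (z 0)⁻¹ • z
  have hy : ∀ i, 0 < y i := fun i => mul_pos (inv_pos.2 (hz 0)) (hz i)
  have hy0 : y 0 = 1 := inv_mul_cancel₀ (hz 0).ne'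
  have hyM : y ᵥ* M = y := by rw [smul_vecMul, hzM, one_smul]
  refine ⟨y, hy, hy0, hyM, Set.eq_singleton_iff_unique_mem.2 ⟨⟨fun i => (hy i).le, hy0, ?_⟩, ?_⟩⟩
  · simp [vecMul_sub, hyM]
  · rintro w ⟨-, hw0, hw⟩
    obtain ⟨t, rfl⟩ := exists_eq_smul_of_vecMul_eq_smul hM hy (hyM.trans (one_smul ℝ y).symm)
      ((vecMul_eq_self_of_nonneg_vecMul_one_sub hx hMx hw).trans (one_smul ℝ w).symm)
    rw [Pi.smul_apply, hy0, smul_eq_mul, mul_one] at hw0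
    rw [hw0, one_smul]
end
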